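/- Let G be a finite simple graph with clique partition π = {W₁,…,W_r}, and let C be a minimal vertex cover of the clique-whiskered graph G^π. Then V(G) \ C is an independent set of G, and hence |V(G) \ C| ≤ im(G^π), the induced matching number of G^π. -/

import Mathlib

def cliqueWhisker {V ι : Type*} (G : SimpleGraph V) (p : V → ι) :
    SimpleGraph (V ⊕ ι) :=
  SimpleGraph.fromRel (fun a b =>
    match a, b with
    | Sum.inl u, Sum.inl v => G.Adj u v
    | Sum.inl u, Sum.inr i => p u = i
    | _, _ => False)

def whiskerGraph {V : Type*} (G : SimpleGraph V) : SimpleGraph (V ⊕ V) :=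
  SimpleGraph.fromRel (fun a b =>
    match a, b with
    | Sum.inl u, Sum.inl v => G.Adj u v
    | Sum.inl u, Sum.inr w => u = w
    | _, _ => False)

def IsVertexCover {V : Type*} (G : SimpleGraph V) (C : Set V) : Prop :=
  ∀ ⦃u v : V⦄, G.Adj u v → u ∈ C ∨ v ∈ C

def IsMinVertexCover {V : Type*} (G : SimpleGraph V) (C : Set V) : Prop :=
  IsVertexCover G C ∧ ∀ D ⊆ C, IsVertexCover G D → D = C

def IsIndep {V : Type*} (G : SimpleGraph V) (A : Set V) : Prop :=
  ∀ u ∈ A, ∀ v ∈ A, ¬ G.Adj u v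

def IsInducedMatching {V : Type*} (G : SimpleGraph V) (M : Finset (Sym2 V)) : Prop :=
  (↑M : Set (Sym2 V)) ⊆ G.edgeSet ∧
    ∀ e ∈ M, ∀ f ∈ M, e ≠ f → ∀ u ∈ e, ∀ v ∈ f, u ≠ v ∧ ¬ G.Adj u v

noncomputable def inducedMatchingNumber {V : Type*} [Fintype V] (G : SimpleGraph V) : ℕ :=
  sSup {n | ∃ M : Finset (Sym2 V), IsInducedMatching G M ∧ M.card = n}

/-! Every edge of `G^π` meets the cover `C`, so `V(G) \ C` is independent in `G`. Since each `Wᵢ`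
is a clique, `V(G) \ C` meets each `Wᵢ` at most once, so the whiskers at its vertices are pairwise
non-adjacent and form an induced matching. -/

section CliqueWhisker

variable {V ι : Type*} {G : SimpleGraph V} {p : V → ι}

@[simp]
theorem cliqueWhisker_adj_inl_inl {u v : V} :
    (cliqueWhisker G p).Adj (.inl u) (.inl v) ↔ G.Adj u v := by
  simp only [cliqueWhisker, SimpleGraph.fromRel_adj, ne_eq, Sum.inl.injEq]
  exact ⟨fun h => h.2.elim id .symm, fun h => ⟨h.ne, .inl h⟩⟩

@[simp]
theorem cliqueWhisker_adj_inl_inr {u : V} {i : ι} :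
    (cliqueWhisker G p).Adj (.inl u) (.inr i) ↔ p u = i := by
  simp [cliqueWhisker]

@[simp]
theorem cliqueWhisker_adj_inr_inl {u : V} {i : ι} :
    (cliqueWhisker G p).Adj (.inr i) (.inl u) ↔ p u = i := by
  rw [SimpleGraph.adj_comm, cliqueWhisker_adj_inl_inr]

@[simp]
theorem not_cliqueWhisker_adj_inr_inr {i j : ι} : ¬ (cliqueWhisker G p).Adj (.inr i) (.inr j) := by
  simp [cliqueWhisker]

theorem IsVertexCover.isIndep_inl_compl {C : Set (V ⊕ ι)}
    (hC : IsVertexCover (cliqueWhisker G p) C) : IsIndep G {v | .inl v ∉ C} :=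
  fun _ hu _ hv huv => (hC (cliqueWhisker_adj_inl_inl.2 huv)).elim hu hv

def whiskerEdge (p : V → ι) : V ↪ Sym2 (V ⊕ ι) :=
  ⟨fun v => s(.inl v, .inr (p v)), fun a b hab => by simp_all⟩

@[simp]
theorem whiskerEdge_apply (p : V → ι) (v : V) :
    whiskerEdge p v = s(.inl v, .inr (p v)) :=
  rfl

theorem IsIndep.injOn_of_fibers_isClique (hclique : ∀ u v : V, p u = p v → u ≠ v → G.Adj u v) {S : Set V} (hS : IsIndep G S) :
    S.InjOn p := fun u hu v hv huv => by
  by_contra hne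
  exact hS u hu v hv (hclique u v huv hne)

theorem isInducedMatching_map_whiskerEdge {S : Finset V} (hS : IsIndep G S)
    (hp : Set.InjOn p S) : IsInducedMatching (cliqueWhisker G p) (S.map (whiskerEdge p)) := by
  refine ⟨?_, ?_⟩
  · rintro _ he
    obtain ⟨v, -, rfl⟩ := Finset.mem_map.1 he
    simp
  · intro e he f hf hef x hx y hy
    obtain ⟨a, ha, rfl⟩ := Finset.mem_map.1 he
    obtain ⟨b, hb, rfl⟩ := Finset.mem_map.1 hf
    have hab : a ≠ b := by rintro rfl; exact hef rfl
    have hpab : p a ≠ p b := fun h => hab (hp ha hb h)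
    rw [whiskerEdge_apply, Sym2.mem_iff] at hx hy
    rcases hx with rfl | rfl <;> rcases hy with rfl | rfl
    · exact ⟨by simpa using hab, by simpa using hS a ha b hb⟩
    · simpa using hpab
    · simpa using hpab.symm
    · simpa using hpab

end CliqueWhisker

theorem IsInducedMatching.card_le_inducedMatchingNumber {V : Type*} [Fintype V]
    {G : SimpleGraph V} {M : Finset (Sym2 V)} (hM : IsInducedMatching G M) :
    M.card ≤ inducedMatchingNumber G := by
  classical
  refine le_csSup ⟨Fintype.card (Sym2 V), ?_⟩ ⟨M, hM, rfl⟩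
  rintro _ ⟨N, -, rfl⟩
  exact N.card_le_univ

theorem stmt10_general {V : Type*} [Fintype V] {r : ℕ} (G : SimpleGraph V) (p : V → Fin r)
    (hclique : ∀ u v : V, p u = p v → u ≠ v → G.Adj u v)
    (C : Set (V ⊕ Fin r)) (hC : IsMinVertexCover (cliqueWhisker G p) C) :
    IsIndep G {v : V | Sum.inl v ∉ C} ∧
      Set.ncard {v : V | Sum.inl v ∉ C} ≤
        inducedMatchingNumber (cliqueWhisker G p) := by
  classical
  have hindep := hC.1.isIndep_inl_compl
  refine ⟨hindep, ?_⟩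
  set S := {v : V | Sum.inl v ∉ C}.toFinset
  have hS : IsIndep G S := by simpa [S] using hindep
  calc {v : V | Sum.inl v ∉ C}.ncard = (S.map (whiskerEdge p)).card := by
        rw [Finset.card_map, Set.ncard_eq_toFinset_card']
    _ ≤ inducedMatchingNumber (cliqueWhisker G p) :=
        (isInducedMatching_map_whiskerEdge hS
          (hS.injOn_of_fibers_isClique hclique)).card_le_inducedMatchingNumber

theorem stmt10 {V : Type*} [Fintype V] {r : ℕ} (G : SimpleGraph V) (p : V → Fin r)
    (hclique : ∀ u v : V, p u = p v → u ≠ v → G.Adj u v)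
    (hsurj : Function.Surjective p)
    (C : Set (V ⊕ Fin r)) (hC : IsMinVertexCover (cliqueWhisker G p) C) :
    IsIndep G {v : V | Sum.inl v ∉ C} ∧
      Set.ncard {v : V | Sum.inl v ∉ C} ≤
        inducedMatchingNumber (cliqueWhisker G p) :=
  stmt10_general G p hclique C hC
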